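/- arXiv:2509.16498 — 2 statements merged into one kernel-verified Lean document; each statement's English description precedes it below -/
import Mathlib

section
/- For nonnegative real numbers s, t, u, v (traces of distances) with u ≤ s + t, and nonnegative reals x = tr(A), y = tr(B): (x+y)/(x+y+u) ≥ min( x/(x+s), y/(y+t) ). -/
/-- Key inequality for the triangle property of `F_{p,q}(C) = tr C / (tr C + tr d(p,q))`:
for nonnegative reals `s, t, u, x, y` with `u ≤ s + t`,
`(x+y)/(x+y+u) ≥ min (x/(x+s)) (y/(y+t))`. -/
theorem trace_fraction_min_inequality (s t u x y : ℝ)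
    (hs : 0 ≤ s) (ht : 0 ≤ t) (hu : 0 ≤ u) (hx : 0 ≤ x) (hy : 0 ≤ y)
    (hust : u ≤ s + t) :
    min (x / (x + s)) (y / (y + t)) ≤ (x + y) / (x + y + u) := by
  set m := min (x / (x + s)) (y / (y + t)) with hm
  have hm0 : 0 ≤ m :=
    le_min (div_nonneg hx (by linarith)) (div_nonneg hy (by linarith))
  have h1 : m * (x + s) ≤ x := by
    rcases eq_or_lt_of_le (by linarith : (0:ℝ) ≤ x + s) with h | h
    · rw [← h]; simpa using hx
    · have hle := min_le_left (x / (x + s)) (y / (y + t))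
      calc m * (x + s) ≤ x / (x + s) * (x + s) := by
            exact mul_le_mul_of_nonneg_right hle h.le
        _ = x := div_mul_cancel₀ x h.ne'
  have h2 : m * (y + t) ≤ y := by
    rcases eq_or_lt_of_le (by linarith : (0:ℝ) ≤ y + t) with h | h
    · rw [← h]; simpa using hy
    · have hle := min_le_right (x / (x + s)) (y / (y + t))
      calc m * (y + t) ≤ y / (y + t) * (y + t) := by
            exact mul_le_mul_of_nonneg_right hle h.le
        _ = y := div_mul_cancel₀ y h.ne'
  rcases eq_or_lt_of_le (by linarith : (0:ℝ) ≤ x + y + u) with h | h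
  · have hx0 : x = 0 := by linarith
    have hy0 : y = 0 := by linarith
    rw [← h]
    simp only [div_zero]
    have : m ≤ x / (x + s) := min_le_left _ _
    rw [hx0] at this
    simpa using this
  · rw [le_div_iff₀ h]
    nlinarith
end

section
/- Let (X, A, d) be a C*-algebra-valued metric space with A = M₂(ℝ) and define F_{p,q}(C) = tr(C)/(tr(C + d(p,q))) for C a positive definite matrix. Then for all p, q, r ∈ X and positive matrices A, B: F_{p,q}(A+B) ≥ min(F_{p,r}(A), F_{r,q}(B)). -/
open Matrix

/-!
Taking traces turns the matrix triangle inequality into `tr d(p,q) ≤ tr d(p,r) + tr d(r,q)`.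
With `a = tr A`, `b = tr B`, the value `(a + b) / (a + b + tr d(p,q))` is then at least the
mediant `(a + b) / ((a + tr d(p,r)) + (b + tr d(r,q)))`, which is at least the smaller of
`a / (a + tr d(p,r))` and `b / (b + tr d(r,q))`.
-/

theorem min_div_le_add_div_add {α : Type*} [Field α] [LinearOrder α] [IsStrictOrderedRing α]
    {a b c d : α} (hc : 0 < c) (hd : 0 < d) :
    min (a / c) (b / d) ≤ (a + b) / (c + d) := by
  have hac : min (a / c) (b / d) * c ≤ a :=
    (le_div_iff₀ hc).mp (min_le_left _ _)
  have hbd : min (a / c) (b / d) * d ≤ b :=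
    (le_div_iff₀ hd).mp (min_le_right _ _)
  rw [le_div_iff₀ (add_pos hc hd)]
  linarith

theorem Matrix.trace_le_trace_add_trace_of_posSemidef {n : Type*} [Fintype n]
    {L M N : Matrix n n ℝ} (h : (M + N - L).PosSemidef) :
    L.trace ≤ M.trace + N.trace := by
  have := h.trace_nonneg
  rw [trace_sub, trace_add] at this
  linarith

theorem prob_metric_trace_min_triangle_general {X : Type*}
    (d : X → X → Matrix (Fin 2) (Fin 2) ℝ)
    (hpos : ∀ p q, (d p q).PosSemidef)
    (htri : ∀ p q r, (d p r + d r q - d p q).PosSemidef)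
    (F : X → X → Matrix (Fin 2) (Fin 2) ℝ → ℝ)
    (hF : ∀ p q C, F p q C = (Matrix.trace C) / (Matrix.trace (C + d p q)))
    (p q r : X) (A B : Matrix (Fin 2) (Fin 2) ℝ)
    (hA : A.PosDef) (hB : B.PosDef) :
    min (F p r A) (F r q B) ≤ F p q (A + B) := by
  have ha := hA.trace_pos
  have hb := hB.trace_pos
  have hx := (hpos p r).trace_nonneg
  have hy := (hpos r q).trace_nonneg
  have hz := (hpos p q).trace_nonneg
  have htr := trace_le_trace_add_trace_of_posSemidef (htri p q r)
  simp only [hF, trace_add]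
  calc min (A.trace / (A.trace + (d p r).trace)) (B.trace / (B.trace + (d r q).trace))
      ≤ (A.trace + B.trace) / ((A.trace + (d p r).trace) + (B.trace + (d r q).trace)) :=
        min_div_le_add_div_add (by linarith) (by linarith)
    _ ≤ (A.trace + B.trace) / (A.trace + B.trace + (d p q).trace) :=
        div_le_div_of_nonneg_left (by linarith) (by linarith) (by linarith)

/-- Triangle property for the probabilistic metric
`F_{p,q}(C) = tr C / tr (C + d(p,q))` with the minimum t-norm, on a
C*-algebra-valued metric space `(X, M₂(ℝ), d)`. -/
theorem prob_metric_trace_min_triangle {X : Type*}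
    (d : X → X → Matrix (Fin 2) (Fin 2) ℝ)
    (hpos : ∀ p q, (d p q).PosSemidef)
    (hzero : ∀ p q, d p q = 0 ↔ p = q)
    (hsymm : ∀ p q, d p q = d q p)
    (htri : ∀ p q r, (d p r + d r q - d p q).PosSemidef)
    (F : X → X → Matrix (Fin 2) (Fin 2) ℝ → ℝ)
    (hF : ∀ p q C, F p q C = (Matrix.trace C) / (Matrix.trace (C + d p q)))
    (p q r : X) (A B : Matrix (Fin 2) (Fin 2) ℝ)
    (hA : A.PosDef) (hB : B.PosDef) :
    min (F p r A) (F r q B) ≤ F p q (A + B) :=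
  prob_metric_trace_min_triangle_general d hpos htri F hF p q r A B hA hB
end
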